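/- arXiv:1707.09357 — 2 statements merged into one kernel-verified Lean document; each statement's English description precedes it below -/
import Mathlib

section
/- Let f be a homeomorphism of a compact metric space (X,d) and let n be a positive integer. If f is positively n-expansive, topologically transitive, and has the shadowing property, then X is a finite set. -/
open Metric Filter Set

variable {X : Type*} [MetricSpace X]

/-- The iterate of a homeomorphism by an integer power. -/
def hIter (f : X ≃ₜ X) (k : ℤ) (x : X) : X := (f.toEquiv ^ k) x

/-- The local stable set of `x` of size `c`:
points whose forward iterates stay `c`-close to those of `x`. -/
def localStable (f : X ≃ₜ X) (c : ℝ) (x : X) : Set X :=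
  {y | ∀ k : ℕ, dist ((⇑f)^[k] y) ((⇑f)^[k] x) ≤ c}

/-- The local unstable set of `x` of size `c`:
points whose backward iterates stay `c`-close to those of `x`. -/
def localUnstable (f : X ≃ₜ X) (c : ℝ) (x : X) : Set X :=
  {y | ∀ k : ℕ, dist ((⇑f.symm)^[k] y) ((⇑f.symm)^[k] x) ≤ c}

/-- The stable set of `x`. -/
def stableSet (f : X ≃ₜ X) (x : X) : Set X :=
  {y | Tendsto (fun k : ℕ => dist ((⇑f)^[k] y) ((⇑f)^[k] x)) atTop (nhds 0)}

/-- The unstable set of `x`. -/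
def unstableSet (f : X ≃ₜ X) (x : X) : Set X :=
  {y | Tendsto (fun k : ℕ => dist ((⇑f.symm)^[k] y) ((⇑f.symm)^[k] x)) atTop (nhds 0)}

/-- `f` is positively `n`-expansive: for some `c > 0` every local stable set of
size `c` contains at most `n` points. -/
def PosNExpansive (f : X ≃ₜ X) (n : ℕ) : Prop :=
  ∃ c > 0, ∀ x : X, ∀ S : Finset X, ↑S ⊆ localStable f c x → S.card ≤ n

/-- `f` is `n`-expansive: for some `c > 0` every dynamical ball of size `c`
contains at most `n` points. -/
def NExpansive (f : X ≃ₜ X) (n : ℕ) : Prop :=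
  ∃ c > 0, ∀ x : X, ∀ S : Finset X,
    ↑S ⊆ localStable f c x ∩ localUnstable f c x → S.card ≤ n

/-- `f` is expansive. -/
def Expansive (f : X ≃ₜ X) : Prop :=
  ∃ c > 0, ∀ x y : X, (∀ k : ℤ, dist (hIter f k x) (hIter f k y) ≤ c) → x = y

/-- `(x_k)_{k ∈ ℤ}` is a `δ`-pseudo-orbit. -/
def IsPseudoOrbit (f : X ≃ₜ X) (δ : ℝ) (x : ℤ → X) : Prop :=
  ∀ k : ℤ, dist (f (x k)) (x (k + 1)) < δ

/-- `(x_k)_{k ∈ ℤ}` is a two-sided limit pseudo-orbit: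
`d(f(x_k), x_{k+1}) → 0` as `|k| → ∞`. -/
def IsTwoSidedLimitPseudoOrbit (f : X ≃ₜ X) (x : ℤ → X) : Prop :=
  Tendsto (fun k : ℤ => dist (f (x k)) (x (k + 1))) cofinite (nhds 0)

/-- `z` `ε`-shadows the sequence `(x_k)_{k ∈ ℤ}`. -/
def Shadows (f : X ≃ₜ X) (ε : ℝ) (z : X) (x : ℤ → X) : Prop :=
  ∀ k : ℤ, dist (hIter f k z) (x k) < ε

/-- `z` two-sided limit shadows `(x_k)_{k ∈ ℤ}`. -/
def TwoSidedLimitShadows (f : X ≃ₜ X) (z : X) (x : ℤ → X) : Prop :=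
  Tendsto (fun k : ℤ => dist (hIter f k z) (x k)) cofinite (nhds 0)

/-- The shadowing property. -/
def ShadowingProperty (f : X ≃ₜ X) : Prop :=
  ∀ ε > 0, ∃ δ > 0, ∀ x : ℤ → X, IsPseudoOrbit f δ x → ∃ z : X, Shadows f ε z x

/-- The L-shadowing property. -/
def LShadowingProperty (f : X ≃ₜ X) : Prop :=
  ∀ ε > 0, ∃ δ > 0, ∀ x : ℤ → X, IsPseudoOrbit f δ x →
    IsTwoSidedLimitPseudoOrbit f x →
    ∃ z : X, Shadows f ε z x ∧ TwoSidedLimitShadows f z x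

/-- Topological transitivity. -/
def TopTransitive (f : X ≃ₜ X) : Prop :=
  ∀ U V : Set X, IsOpen U → IsOpen V → U.Nonempty → V.Nonempty →
    ∃ k : ℕ, ((⇑f)^[k] '' U ∩ V).Nonempty

/-- There is a nontrivial finite `ε`-pseudo-orbit from `x` to `y`. -/
def ChainFrom (f : X ≃ₜ X) (ε : ℝ) (x y : X) : Prop :=
  ∃ (l : ℕ) (c : ℕ → X), 0 < l ∧ c 0 = x ∧ c l = y ∧
    ∀ k < l, dist (f (c k)) (c (k + 1)) < ε

/-- `x` is a chain recurrent point of `f`. -/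
def ChainRecurrent (f : X ≃ₜ X) (x : X) : Prop :=
  ∀ ε > 0, ChainFrom f ε x x

/-- The chain recurrent class of `x`. -/
def chainClass (f : X ≃ₜ X) (x : X) : Set X :=
  {y | ∀ ε > 0, ChainFrom f ε x y ∧ ChainFrom f ε y x}

/-- `x` is a periodic point of `f`. -/
def Periodic (f : X ≃ₜ X) (x : X) : Prop :=
  ∃ k : ℕ, 1 ≤ k ∧ (⇑f)^[k] x = x

/-- `x` is a non-wandering point of `f`. -/
def NonWandering (f : X ≃ₜ X) (x : X) : Prop :=
  ∀ U : Set X, IsOpen U → x ∈ U → ∃ k : ℕ, 0 < k ∧ ((⇑f)^[k] '' U ∩ U).Nonempty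

/-- The omega limit set of `x`: accumulation points of the forward orbit. -/
def omegaLimitSet (f : X ≃ₜ X) (x : X) : Set X :=
  {y | ∃ φ : ℕ → ℕ, StrictMono φ ∧ Tendsto (fun n => (⇑f)^[φ n] x) atTop (nhds y)}

/-- `z` two-sided limit shadows `(x_k)` with gap `K`. -/
def TwoSidedLimitShadowsWithGap (f : X ≃ₜ X) (K : ℤ) (z : X) (x : ℤ → X) : Prop :=
  Tendsto (fun k : ℤ => dist (hIter f k z) (x k)) atBot (nhds 0) ∧
  Tendsto (fun k : ℤ => dist (hIter f (K + k) z) (x k)) atTop (nhds 0)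

section Helpers

variable {X : Type*} [MetricSpace X]

lemma hIter_natCast (f : X ≃ₜ X) : ∀ (k : ℕ) (z : X), hIter f (k : ℤ) z = (⇑f)^[k] z := by
  intro k
  induction k with
  | zero => intro z; simp [hIter]
  | succ m ih =>
    intro z
    have h : ((m + 1 : ℕ) : ℤ) = (m : ℤ) + 1 := by push_cast; ring
    show (f.toEquiv ^ ((m + 1 : ℕ) : ℤ)) z = _
    rw [h, zpow_add_one]
    have : (f.toEquiv ^ (m : ℤ) * f.toEquiv) z = (f.toEquiv ^ (m : ℤ)) (f.toEquiv z) :=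
      Equiv.Perm.mul_apply _ _ _
    rw [this]
    have h2 : (f.toEquiv ^ (m : ℤ)) (f.toEquiv z) = hIter f (m : ℤ) (f z) := rfl
    rw [h2, ih (f z), ← Function.iterate_succ_apply]

lemma dense_finite_finite {s : Set X} (hd : Dense s) (hf : s.Finite) : Finite X := by
  have hcl : IsClosed s := hf.isClosed
  have : s = Set.univ := by rw [← hcl.closure_eq, hd.closure_eq]
  rw [this] at hf
  exact Set.finite_univ_iff.mp hf

lemma orbit_finite_of_eventually_periodic (f : X ≃ₜ X) (a : X) (s p : ℕ) (hp : 1 ≤ p)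
    (h : (⇑f)^[s + p] a = (⇑f)^[s] a) : (Set.range fun k => (⇑f)^[k] a).Finite := by
  have key : ∀ k : ℕ, ∃ j, j < s + p ∧ (⇑f)^[j] a = (⇑f)^[k] a := by
    intro k
    induction k using Nat.strong_induction_on with
    | _ k ih =>
      by_cases hk : k < s + p
      · exact ⟨k, hk, rfl⟩
      · push_neg at hk
        have h1 : (⇑f)^[k] a = (⇑f)^[k - p] a := by
          have e1 : k = (k - (s + p)) + (s + p) := by omega
          have e2 : (k - (s + p)) + s = k - p := by omega
          calc (⇑f)^[k] a = (⇑f)^[(k - (s + p)) + (s + p)] a := by rw [← e1]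
            _ = (⇑f)^[k - (s + p)] ((⇑f)^[s + p] a) := Function.iterate_add_apply _ _ _ _
            _ = (⇑f)^[k - (s + p)] ((⇑f)^[s] a) := by rw [h]
            _ = (⇑f)^[(k - (s + p)) + s] a := (Function.iterate_add_apply _ _ _ _).symm
            _ = (⇑f)^[k - p] a := by rw [e2]
        obtain ⟨j, hj, hje⟩ := ih (k - p) (by omega)
        exact ⟨j, hj, by rw [hje, ← h1]⟩
  have hsub : (Set.range fun k => (⇑f)^[k] a) ⊆ (fun j => (⇑f)^[j] a) '' (Set.Iio (s + p)) := by
    rintro _ ⟨k, rfl⟩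
    obtain ⟨j, hj, hje⟩ := key k
    exact ⟨j, hj, hje⟩
  exact ((Set.finite_Iio _).image _).subset hsub

end Helpers
section Helpers2

variable {X : Type*} [MetricSpace X]

lemma chain_trans (f : X ≃ₜ X) (h : TopTransitive f) {δ : ℝ} (hδ : 0 < δ) (x y : X) :
    ChainFrom f δ x y := by
  obtain ⟨k, hk⟩ := h (Metric.ball (f x) (δ/2)) (Metric.ball y (δ/2)) Metric.isOpen_ball
    Metric.isOpen_ball ⟨f x, Metric.mem_ball_self (by linarith)⟩
    ⟨y, Metric.mem_ball_self (by linarith)⟩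
  obtain ⟨_, ⟨w, hwU, rfl⟩, hwV⟩ := hk
  set c : ℕ → X := fun j => if j = 0 then x else if j ≤ k then (⇑f)^[j-1] w else y with hc
  have hc0 : c 0 = x := by simp [hc]
  have hcw : ∀ j, 1 ≤ j → j ≤ k → c j = (⇑f)^[j-1] w := by
    intro j h1 h2
    simp only [hc, if_neg (by omega : j ≠ 0), if_pos h2]
  have hcy : ∀ j, k < j → c j = y := by
    intro j h1
    simp only [hc, if_neg (by omega : j ≠ 0), if_neg (by omega : ¬ j ≤ k)]
  have hiter : ∀ j : ℕ, 1 ≤ j → f ((⇑f)^[j-1] w) = (⇑f)^[j] w := by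
    intro j h1
    have e : j - 1 + 1 = j := by omega
    calc f ((⇑f)^[j-1] w) = (⇑f)^[j-1+1] w := (Function.iterate_succ_apply' _ _ _).symm
      _ = (⇑f)^[j] w := by rw [e]
  have h1 : dist w (f x) < δ/2 := hwU
  have h2 : dist ((⇑f)^[k] w) y < δ/2 := hwV
  refine ⟨k + 1, c, by omega, hc0, hcy (k+1) (by omega), ?_⟩
  intro j hj
  rcases Nat.eq_zero_or_pos j with rfl | hjpos
  · rw [hc0]
    rcases Nat.eq_zero_or_pos k with rfl | hkpos
    · rw [hcy 1 (by omega)]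
      simp only [Function.iterate_zero, id] at h2
      calc dist (f x) y ≤ dist (f x) w + dist w y := dist_triangle _ _ _
        _ < δ := by rw [dist_comm (f x) w]; linarith
    · rw [hcw 1 (by omega) (by omega)]
      simp only [Nat.sub_self, Function.iterate_zero, id]
      rw [dist_comm] at h1
      linarith
  · by_cases hjk : j + 1 ≤ k
    · rw [hcw j (by omega) (by omega), hcw (j+1) (by omega) hjk, hiter j (by omega)]
      have e : j + 1 - 1 = (j - 1) + 1 := by omega
      rw [e, Function.iterate_succ_apply', hiter j (by omega)]
      simp [hδ]
    · have hjeq : j = k := by omega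
      subst hjeq
      rw [hcw j (by omega) (le_refl j), hcy (j+1) (by omega), hiter j (by omega)]
      linarith

lemma exists_dense_orbit [CompactSpace X] [Nonempty X] (f : X ≃ₜ X) (h : TopTransitive f) :
    ∃ a : X, Dense (Set.range fun k => (⇑f)^[k] a) := by
  obtain ⟨D, hDc, hDd⟩ := TopologicalSpace.exists_countable_dense X
  haveI : Countable D := hDc.to_subtype
  set g : D × ℕ → Set X := fun p =>
    ⋃ k : ℕ, (⇑f)^[k] ⁻¹' (Metric.ball (p.1 : X) (1 / (p.2 + 1))) with hg
  have hopen : ∀ p, IsOpen (g p) := by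
    intro p
    exact isOpen_iUnion fun k => (Metric.isOpen_ball).preimage (f.continuous.iterate k)
  have hdense : ∀ p, Dense (g p) := by
    intro p
    rw [dense_iff_inter_open]
    intro U hU hUne
    obtain ⟨k, hk⟩ := h U (Metric.ball (p.1 : X) (1 / (p.2 + 1))) hU Metric.isOpen_ball hUne
      ⟨p.1, Metric.mem_ball_self (by positivity)⟩
    obtain ⟨_, ⟨w, hwU, rfl⟩, hwV⟩ := hk
    exact ⟨w, hwU, Set.mem_iUnion.mpr ⟨k, hwV⟩⟩
  have hd : Dense (⋂ p, g p) := dense_iInter_of_isOpen hopen hdense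
  obtain ⟨a, ha⟩ := hd.nonempty
  refine ⟨a, ?_⟩
  rw [dense_iff_inter_open]
  intro U hU ⟨x, hx⟩
  obtain ⟨η, hη, hball⟩ := Metric.isOpen_iff.mp hU x hx
  obtain ⟨d, hd1, hd2⟩ := Metric.dense_iff.mp hDd x (η/2) (by linarith)
  obtain ⟨m, hm⟩ := exists_nat_gt (2/η)
  have hm' : 1 / ((m:ℝ) + 1) < η/2 := by
    rw [div_lt_iff₀ (by positivity)]
    rw [div_lt_iff₀ hη] at hm
    nlinarith
  have hag := Set.mem_iInter.mp ha ⟨⟨d, hd2⟩, m⟩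
  obtain ⟨k, hk⟩ := Set.mem_iUnion.mp hag
  refine ⟨(⇑f)^[k] a, ?_, ⟨k, rfl⟩⟩
  apply hball
  have h1 : dist ((⇑f)^[k] a) d < 1/((m:ℝ)+1) := hk
  have h2 : dist d x < η/2 := hd1
  calc dist ((⇑f)^[k] a) x ≤ dist ((⇑f)^[k] a) d + dist d x := dist_triangle _ _ _
    _ < η := by linarith

end Helpers2
section CaseA

variable {X : Type*} [MetricSpace X]

lemma caseA (f : X ≃ₜ X) (a : X) (c ε δ : ℝ) (hδ : 0 < δ) (hε : 0 < ε) (hεc : ε ≤ c) (n : ℕ)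
    (hshadδ : ∀ x : ℤ → X, IsPseudoOrbit f δ x → ∃ z : X, Shadows f ε z x)
    (r₀ r' t : ℕ) (h1 : 1 ≤ r₀) (hbig : r₀ + t + 1 ≤ r')
    (hr₀ : dist ((⇑f)^[r₀] a) a < δ) (hr' : dist ((⇑f)^[r'] a) a < δ)
    (ht : 2*ε ≤ dist ((⇑f)^[t] a) ((⇑f)^[t + r₀] a)) :
    ∃ S : Finset X, ↑S ⊆ localStable f c a ∧ S.card = n + 1 := by
  set m : ℕ := r₀ + r' with hm
  have hm0 : 0 < m := by omega
  set G : ℕ → ℕ → X := fun b φ =>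
    if b = 0 then (if φ < r₀ then (⇑f)^[φ] a else (⇑f)^[φ - r₀] a)
    else (if φ < r' then (⇑f)^[φ] a else (⇑f)^[φ - r'] a) with hG
  have hGzero : ∀ b, G b 0 = a := by
    intro b
    by_cases hb : b = 0 <;>
      simp [hG, hb, if_pos (by omega : 0 < r₀), if_pos (by omega : 0 < r')]
  have hiter : ∀ (j : ℕ) (u : X), f ((⇑f)^[j] u) = (⇑f)^[j+1] u := by
    intro j u; rw [Function.iterate_succ_apply']
  have hGstep : ∀ b ψ, ψ + 1 < m → dist (f (G b ψ)) (G b (ψ+1)) < δ := by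
    have key : ∀ r : ℕ, 1 ≤ r → dist ((⇑f)^[r] a) a < δ →
        ∀ ψ, dist (f (if ψ < r then (⇑f)^[ψ] a else (⇑f)^[ψ - r] a))
          (if ψ + 1 < r then (⇑f)^[ψ+1] a else (⇑f)^[ψ+1-r] a) < δ := by
      intro r hr1 hrd ψ
      by_cases hlt : ψ + 1 < r
      · rw [if_pos (by omega), if_pos hlt, hiter]
        simp [hδ]
      · by_cases heq : ψ + 1 = r
        · rw [if_pos (by omega), if_neg hlt, hiter]
          have e : ψ + 1 - r = 0 := by omega
          rw [e, heq]
          simpa using hrd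
        · rw [if_neg (by omega), if_neg hlt]
          have e : ψ + 1 - r = (ψ - r) + 1 := by omega
          rw [e, hiter]
          simp [hδ]
    intro b ψ hψ
    by_cases hb : b = 0
    · simp only [hG, hb, if_pos rfl]
      exact key r₀ h1 hr₀ ψ
    · simp only [hG, if_neg hb]
      exact key r' (by omega) hr' ψ
  have hGend : ∀ b, dist (f (G b (m-1))) a < δ := by
    intro b
    by_cases hb : b = 0
    · simp only [hG, hb, if_pos rfl, if_neg (by omega : ¬ m - 1 < r₀)]
      have e : m - 1 - r₀ = r' - 1 := by omega
      rw [e, hiter]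
      have e2 : r' - 1 + 1 = r' := by omega
      rw [e2]; exact hr'
    · simp only [hG, if_neg hb, if_neg (by omega : ¬ m - 1 < r')]
      have e : m - 1 - r' = r₀ - 1 := by omega
      rw [e, hiter]
      have e2 : r₀ - 1 + 1 = r₀ := by omega
      rw [e2]; exact hr₀
  set Q : ℕ → ℕ → X := fun i e => G (if e / m = i then 1 else 0) (m - 1 - e % m) with hQ
  have hQstep : ∀ i e, dist (f (Q i (e+1))) (Q i e) < δ := by
    intro i e
    have hdm : m * (e / m) + e % m = e := Nat.div_add_mod e m
    have hu : e % m < m := Nat.mod_lt _ hm0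
    set q := e / m with hq
    set u := e % m with huu
    by_cases hw : u + 1 = m
    · have hq1 : m * (q + 1) = m * q + m := by ring
      have he1 : e + 1 = m * (q + 1) := by omega
      have hd1 : (e+1) / m = q + 1 := by rw [he1, Nat.mul_div_cancel_left _ hm0]
      have hmo1 : (e+1) % m = 0 := by rw [he1]; exact Nat.mul_mod_right _ _
      have hQe1 : Q i (e+1) = G (if q + 1 = i then 1 else 0) (m - 1) := by
        simp only [hQ, hd1, hmo1, Nat.sub_zero]
      have hQe : Q i e = a := by
        have : m - 1 - u = 0 := by omega
        simp only [hQ, ← hq, ← huu, this, hGzero]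
      rw [hQe1, hQe]
      exact hGend _
    · have he1 : e + 1 = m * q + (u + 1) := by omega
      have hd1 : (e+1) / m = q := by
        rw [he1, Nat.mul_add_div hm0, Nat.div_eq_of_lt (by omega)]
        omega
      have hmo1 : (e+1) % m = u + 1 := by
        rw [he1, Nat.mul_add_mod, Nat.mod_eq_of_lt (by omega)]
      have e2 : m - 1 - u = (m - 1 - (u + 1)) + 1 := by omega
      have hQe1 : Q i (e+1) = G (if q = i then 1 else 0) (m - 1 - (u+1)) := by
        simp only [hQ, hd1, hmo1]
      have hQe : Q i e = G (if q = i then 1 else 0) ((m - 1 - (u+1)) + 1) := by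
        simp only [hQ, ← hq, ← huu, ← e2]
      rw [hQe1, hQe]
      exact hGstep _ _ (by omega)
  set P : ℕ → ℤ → X := fun i k => if 0 ≤ k then (⇑f)^[k.toNat] a else Q i (-k-1).toNat with hP
  have hPpo : ∀ i, IsPseudoOrbit f δ (P i) := by
    intro i k
    rcases lt_trichotomy k (-1) with hk | hk | hk
    · have hk1 : ¬ (0 ≤ k) := by omega
      have hk2 : ¬ (0 ≤ k + 1) := by omega
      have e1 : (-k-1).toNat = (-(k+1)-1).toNat + 1 := by omega
      simp only [hP, if_neg hk1, if_neg hk2, e1]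
      exact hQstep i _
    · subst hk
      have : (-(-1:ℤ)-1).toNat = 0 := by norm_num
      simp only [hP, if_neg (by norm_num : ¬ (0:ℤ) ≤ -1), if_pos (by norm_num : (0:ℤ) ≤ -1 + 1), this]
      have : ((-1:ℤ)+1).toNat = 0 := by norm_num
      rw [this]
      simp only [Function.iterate_zero, id]
      have hq0 : Q i 0 = G (if 0 / m = i then 1 else 0) (m - 1) := by
        simp only [hQ, Nat.zero_mod, Nat.sub_zero]
      rw [hq0]
      exact hGend _
    · have hk1 : 0 ≤ k := by omega
      have hk2 : (0:ℤ) ≤ k + 1 := by omega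
      have e1 : (k+1).toNat = k.toNat + 1 := by omega
      simp only [hP, if_pos hk1, if_pos hk2, e1, hiter]
      simp [hδ]
  have hzex : ∀ i : ℕ, ∃ z : X, Shadows f ε z (P i) := fun i => hshadδ (P i) (hPpo i)
  choose z hz using hzex
  have hPnat : ∀ i (k : ℕ), P i (k : ℤ) = (⇑f)^[k] a := by
    intro i k
    simp only [hP, if_pos (by positivity : (0:ℤ) ≤ (k:ℤ)), Int.toNat_natCast]
  have hzs : ∀ i, z i ∈ localStable f c a := by
    intro i k
    have h := hz i (k : ℤ)
    rw [hPnat, hIter_natCast] at h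
    exact le_trans h.le hεc
  set φ' : ℕ := t + r₀ with hφ'
  have hφm : φ' < m := by omega
  have hzinj : ∀ i j, i ≠ j → z i ≠ z j := by
    intro i j hij hzeq
    set e' : ℕ := m * i + (m - 1 - φ') with he'
    set k' : ℤ := -((e' : ℤ) + 1) with hk'
    have hknn : ¬ (0 ≤ k') := by
      simp only [hk']; omega
    have hent : (-k'-1).toNat = e' := by simp only [hk']; omega
    have hdiv : e' / m = i := by
      rw [he', Nat.mul_add_div hm0, Nat.div_eq_of_lt (by omega)]
      omega
    have hmod : e' % m = m - 1 - φ' := by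
      rw [he', Nat.mul_add_mod, Nat.mod_eq_of_lt (by omega)]
    have hsub : m - 1 - (m - 1 - φ') = φ' := by omega
    have hQval : ∀ (i0 e0 : ℕ), Q i0 e0 = G (if e0 / m = i0 then 1 else 0) (m - 1 - e0 % m) :=
      fun _ _ => rfl
    have hPQ : ∀ i0 : ℕ, P i0 k' = Q i0 e' := by
      intro i0
      simp only [hP, if_neg hknn, hent]
    have hPi : P i k' = (⇑f)^[φ'] a := by
      rw [hPQ, hQval, hdiv, hmod, hsub, if_pos rfl]
      show (if (1:ℕ) = 0 then (if φ' < r₀ then (⇑f)^[φ'] a else (⇑f)^[φ' - r₀] a)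
        else (if φ' < r' then (⇑f)^[φ'] a else (⇑f)^[φ' - r'] a)) = (⇑f)^[φ'] a
      rw [if_neg (by norm_num : ¬ (1:ℕ) = 0), if_pos (by omega : φ' < r')]
    have hPj : P j k' = (⇑f)^[t] a := by
      rw [hPQ, hQval, hdiv, hmod, hsub, if_neg hij]
      show (if (0:ℕ) = 0 then (if φ' < r₀ then (⇑f)^[φ'] a else (⇑f)^[φ' - r₀] a)
        else (if φ' < r' then (⇑f)^[φ'] a else (⇑f)^[φ' - r'] a)) = (⇑f)^[t] a
      rw [if_pos rfl, if_neg (by omega : ¬ φ' < r₀)]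
      congr 1
      omega
    have hi := hz i k'
    have hj := hz j k'
    rw [hPi] at hi
    rw [hPj, ← hzeq] at hj
    have : dist ((⇑f)^[t] a) ((⇑f)^[φ'] a) ≤
        dist ((⇑f)^[t] a) (hIter f k' (z i)) + dist (hIter f k' (z i)) ((⇑f)^[φ'] a) :=
      dist_triangle _ _ _
    rw [dist_comm ((⇑f)^[t] a) (hIter f k' (z i))] at this
    linarith
  classical
  refine ⟨(Finset.range (n+1)).image z, ?_, ?_⟩
  · intro y hy
    simp only [Finset.coe_image, Set.mem_image, Finset.coe_range, Set.mem_Iio] at hy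
    obtain ⟨i, _, rfl⟩ := hy
    exact hzs i
  · rw [Finset.card_image_of_injOn, Finset.card_range]
    intro i _ j _ heq
    by_contra hne
    exact hzinj i j hne heq

end CaseA
section Rest

variable {X : Type*} [MetricSpace X]

lemma caseB (f : X ≃ₜ X) (a : X) (c ε : ℝ) (hε : 0 < ε) (n : ℕ)
    (ha : Dense (Set.range fun k => (⇑f)^[k] a)) (r₀ : ℕ)
    (h2εn : 2 * ε * n ≤ c)
    (hB : ∀ t : ℕ, dist ((⇑f)^[t] a) ((⇑f)^[t + r₀] a) < 2*ε)
    (hnp : ∀ i j : ℕ, i < j → (⇑f)^[j * r₀] a ≠ (⇑f)^[i * r₀] a) :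
    ∃ S : Finset X, ↑S ⊆ localStable f c a ∧ S.card = n + 1 := by
  classical
  have hE : ∀ x : X, ∀ k : ℕ, dist ((⇑f)^[k] x) ((⇑f)^[k] ((⇑f)^[r₀] x)) ≤ 2*ε := by
    set E := {x : X | ∀ k : ℕ, dist ((⇑f)^[k] x) ((⇑f)^[k] ((⇑f)^[r₀] x)) ≤ 2*ε} with hEdef
    have hcl : IsClosed E := by
      have hEi : E = ⋂ k : ℕ, {x : X | dist ((⇑f)^[k] x) ((⇑f)^[k] ((⇑f)^[r₀] x)) ≤ 2*ε} := by
        ext x; simp [hEdef, Set.mem_iInter]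
      rw [hEi]
      refine isClosed_iInter fun k => isClosed_le ?_ continuous_const
      exact Continuous.dist (f.continuous.iterate k)
        ((f.continuous.iterate k).comp (f.continuous.iterate r₀))
    have hsub : (Set.range fun k => (⇑f)^[k] a) ⊆ E := by
      rintro _ ⟨s, rfl⟩ k
      have e1 : (⇑f)^[k] ((⇑f)^[s] a) = (⇑f)^[k + s] a := (Function.iterate_add_apply _ _ _ _).symm
      have e2 : (⇑f)^[k] ((⇑f)^[r₀] ((⇑f)^[s] a)) = (⇑f)^[(k + s) + r₀] a := by
        rw [← Function.iterate_add_apply, ← Function.iterate_add_apply]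
        congr 1
        ring
      rw [e1, e2]
      exact (hB (k + s)).le
    have hcls := closure_minimal hsub hcl
    rw [ha.closure_eq] at hcls
    exact fun x k => hcls (Set.mem_univ x) k
  have claim : ∀ i k : ℕ, dist ((⇑f)^[k] ((⇑f)^[i * r₀] a)) ((⇑f)^[k] a) ≤ 2*ε*(i:ℝ) := by
    intro i
    induction i with
    | zero => intro k; simp
    | succ i ih =>
      intro k
      have e1 : (⇑f)^[(i+1) * r₀] a = (⇑f)^[r₀] ((⇑f)^[i * r₀] a) := by
        rw [← Function.iterate_add_apply]
        congr 1
        ring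
      have step : dist ((⇑f)^[k] ((⇑f)^[(i+1)*r₀] a)) ((⇑f)^[k] ((⇑f)^[i*r₀] a)) ≤ 2*ε := by
        rw [e1, dist_comm]
        exact hE ((⇑f)^[i*r₀] a) k
      calc dist ((⇑f)^[k] ((⇑f)^[(i+1)*r₀] a)) ((⇑f)^[k] a)
          ≤ dist ((⇑f)^[k] ((⇑f)^[(i+1)*r₀] a)) ((⇑f)^[k] ((⇑f)^[i*r₀] a))
            + dist ((⇑f)^[k] ((⇑f)^[i*r₀] a)) ((⇑f)^[k] a) := dist_triangle _ _ _
        _ ≤ 2*ε + 2*ε*(i:ℝ) := add_le_add step (ih k)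
        _ = 2*ε*((i:ℕ) + 1 : ℝ) := by ring
        _ = 2*ε*(((i+1 : ℕ)):ℝ) := by push_cast; ring
  refine ⟨(Finset.range (n+1)).image (fun i => (⇑f)^[i * r₀] a), ?_, ?_⟩
  · intro y hy
    simp only [Finset.coe_image, Set.mem_image, Finset.coe_range, Set.mem_Iio] at hy
    obtain ⟨i, hi, rfl⟩ := hy
    intro k
    refine le_trans (claim i k) ?_
    have hin : (i:ℝ) ≤ (n:ℝ) := by exact_mod_cast (by omega : i ≤ n)
    nlinarith
  · rw [Finset.card_image_of_injOn, Finset.card_range]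
    intro i _ j _ heq
    by_contra hne
    rcases Nat.lt_or_ge i j with h | h
    · exact hnp i j h heq.symm
    · exact hnp j i (by omega) heq

lemma isolated_case [CompactSpace X] (f : X ≃ₜ X) (a : X)
    (ha : Dense (Set.range fun k => (⇑f)^[k] a))
    (htrans : TopTransitive f) (hshad : ShadowingProperty f)
    (v : X) (hv : IsOpen {v}) : Finite X := by
  obtain ⟨ρ, hρ, hball⟩ := Metric.isOpen_iff.mp hv v rfl
  obtain ⟨δ₀, hδ₀, hshad₀⟩ := hshad ρ hρ
  obtain ⟨l, cc, hl, hc0, hcl, hstep⟩ := chain_trans f htrans hδ₀ v v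
  set L : ℤ := (l : ℤ) with hLdef
  have hL : 0 < L := by simp [hLdef]; omega
  set Qp : ℤ → X := fun k => cc ((k % L).toNat) with hQp
  have hpo : IsPseudoOrbit f δ₀ Qp := by
    intro k
    have hge : 0 ≤ k % L := Int.emod_nonneg k (by omega)
    have hlt : k % L < L := Int.emod_lt_of_pos k hL
    set u : ℤ := k % L with hu
    have hkey : (k + 1) % L = if u + 1 = L then 0 else u + 1 := by
      have hdm : L * (k / L) + k % L = k := Int.mul_ediv_add_emod k L
      by_cases hw : u + 1 = L
      · have he : k + 1 = L * (k / L + 1) := by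
          have : L * (k / L + 1) = L * (k / L) + L := by ring
          omega
        rw [he, if_pos hw]
        exact Int.mul_emod_right _ _
      · have he : k + 1 = (u + 1) + L * (k / L) := by omega
        rw [he, if_neg hw, Int.add_mul_emod_self_left]
        exact Int.emod_eq_of_lt (by omega) (by omega)
    by_cases hw : u + 1 = L
    · have h1 : Qp (k+1) = cc 0 := by
        simp only [hQp, hkey, if_pos hw]
        norm_num
      have h2 : Qp k = cc (l - 1) := by
        simp only [hQp, ← hu]
        congr 1
        omega
      rw [h1, h2, hc0]
      have := hstep (l-1) (by omega)
      have e : l - 1 + 1 = l := by omega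
      rw [e, hcl] at this
      exact this
    · have h1 : Qp (k+1) = cc (u.toNat + 1) := by
        simp only [hQp, hkey, if_neg hw]
        congr 1
        omega
      have h2 : Qp k = cc u.toNat := by simp only [hQp, ← hu]
      rw [h1, h2]
      exact hstep u.toNat (by omega)
  obtain ⟨z, hz⟩ := hshad₀ Qp hpo
  have hQ0 : Qp 0 = v := by
    simp only [hQp, Int.zero_emod, Int.toNat_zero, hc0]
  have hzv : z = v := by
    have h0 := hz 0
    rw [hQ0] at h0
    have : hIter f (0:ℤ) z = z := by
      have := hIter_natCast f 0 z
      simpa using this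
    rw [this] at h0
    exact hball h0
  have hper : (⇑f)^[l] v = v := by
    have hL' := hz L
    have hQL : Qp L = v := by
      simp only [hQp, Int.emod_self, Int.toNat_zero, hc0]
    rw [hQL, hLdef, hIter_natCast, hzv] at hL'
    exact hball hL'
  obtain ⟨w, hw1, hw2⟩ := ha.inter_open_nonempty {v} hv ⟨v, rfl⟩
  obtain ⟨k₀, rfl⟩ := hw2
  have hw1' : (⇑f)^[k₀] a = v := by simpa using hw1
  have hper2 : (⇑f)^[k₀ + l] a = (⇑f)^[k₀] a := by
    rw [add_comm, Function.iterate_add_apply, hw1', hper, ← hw1']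
  exact dense_finite_finite ha (orbit_finite_of_eventually_periodic f a k₀ l hl hper2)

lemma tail_dense (f : X ≃ₜ X) (a : X)
    (ha : Dense (Set.range fun k => (⇑f)^[k] a))
    (hniso : ∀ v : X, ¬ IsOpen {v}) (N : ℕ) :
    Dense (Set.range fun k => (⇑f)^[k + N] a) := by
  set T := Set.range fun k => (⇑f)^[k + N] a with hT
  by_contra hnd
  set F := (fun j => (⇑f)^[j] a) '' (Set.Iio N) with hF
  have hFfin : F.Finite := (Set.finite_Iio N).image _
  have hcover : Set.univ ⊆ F ∪ closure T := by
    have h1 : (Set.range fun k => (⇑f)^[k] a) ⊆ F ∪ T := by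
      rintro _ ⟨k, rfl⟩
      by_cases hk : k < N
      · exact Or.inl ⟨k, hk, rfl⟩
      · refine Or.inr ⟨k - N, ?_⟩
        show (⇑f)^[(k - N) + N] a = (⇑f)^[k] a
        congr 1
        omega
    have h2 := closure_mono h1
    rw [ha.closure_eq, closure_union, hFfin.isClosed.closure_eq] at h2
    exact h2.trans (Set.union_subset_union_right F subset_rfl)
  have hUopen : IsOpen (closure T)ᶜ := isClosed_closure.isOpen_compl
  have hUne : (closure T)ᶜ.Nonempty := by
    rw [Set.nonempty_compl]
    intro hTu
    exact hnd (dense_iff_closure_eq.mpr hTu)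
  obtain ⟨u, hu⟩ := hUne
  have hUF : (closure T)ᶜ ⊆ F := fun x hx => (hcover (Set.mem_univ x)).resolve_right hx
  have hSfin : ((closure T)ᶜ \ {u}).Finite :=
    (hFfin.subset hUF).subset Set.diff_subset
  have hsing : {u} = (closure T)ᶜ ∩ ((closure T)ᶜ \ {u})ᶜ := by
    ext x
    simp only [Set.mem_singleton_iff, Set.mem_inter_iff, Set.mem_compl_iff, Set.mem_diff,
      not_and, not_not]
    constructor
    · rintro rfl
      exact ⟨hu, fun _ => rfl⟩
    · rintro ⟨h1, h2⟩
      exact h2 h1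
  exact hniso u (hsing ▸ (hUopen.inter hSfin.isClosed.isOpen_compl))

end Rest
theorem stmt1 {X : Type*} [MetricSpace X] [CompactSpace X] (f : X ≃ₜ X) (n : ℕ)
    (hn : 0 < n) (hexp : PosNExpansive f n) (htrans : TopTransitive f)
    (hshad : ShadowingProperty f) :
    Finite X := by
  by_contra hfin
  have hne : Nonempty X := by
    rcases isEmpty_or_nonempty X with h | h
    · exact absurd Finite.of_subsingleton hfin
    · exact h
  obtain ⟨c, hc, hexpc⟩ := hexp
  obtain ⟨a, ha⟩ := exists_dense_orbit f htrans
  have horb : ∀ s p : ℕ, 1 ≤ p → (⇑f)^[s + p] a = (⇑f)^[s] a → False := fun s p hp h =>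
    hfin (dense_finite_finite ha (orbit_finite_of_eventually_periodic f a s p hp h))
  by_cases hiso : ∃ v : X, IsOpen {v}
  · obtain ⟨v, hv⟩ := hiso
    exact hfin (isolated_case f a ha htrans hshad v hv)
  · push_neg at hiso
    set ε := c / (2 * ((n:ℝ) + 1)) with hεdef
    have hε : 0 < ε := by positivity
    have hden : (0:ℝ) < 2 * ((n:ℝ) + 1) := by positivity
    have hεc : ε ≤ c := by
      rw [hεdef, div_le_iff₀ hden]
      nlinarith
    have h2εn : 2 * ε * n ≤ c := by
      rw [hεdef,
        show 2 * (c / (2 * ((n:ℝ) + 1))) * n = (2 * c * n) / (2 * ((n:ℝ) + 1)) by ring,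
        div_le_iff₀ hden]
      nlinarith [Nat.cast_nonneg (α := ℝ) n]
    obtain ⟨δ, hδ, hshadδ⟩ := hshad ε hε
    have hret : ∀ N : ℕ, ∃ r : ℕ, N + 1 ≤ r ∧ dist ((⇑f)^[r] a) a < δ := by
      intro N
      obtain ⟨w, hw1, hw2⟩ := (tail_dense f a ha hiso (N+1)).inter_open_nonempty
        (Metric.ball a δ) Metric.isOpen_ball ⟨a, Metric.mem_ball_self hδ⟩
      obtain ⟨k, rfl⟩ := hw2
      exact ⟨k + (N+1), by omega, by simpa using hw1⟩
    obtain ⟨r₀, hr₀1, hr₀⟩ := hret 0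
    by_cases hA : ∃ t : ℕ, 2 * ε ≤ dist ((⇑f)^[t] a) ((⇑f)^[t + r₀] a)
    · obtain ⟨t, ht⟩ := hA
      obtain ⟨r', hr'1, hr'⟩ := hret (r₀ + t)
      obtain ⟨S, hS1, hS2⟩ :=
        caseA f a c ε δ hδ hε hεc n hshadδ r₀ r' t (by omega) (by omega) hr₀ hr' ht
      have := hexpc a S hS1
      omega
    · push_neg at hA
      have hnp : ∀ i j : ℕ, i < j → (⇑f)^[j * r₀] a ≠ (⇑f)^[i * r₀] a := by
        intro i j hij heq
        have hpos : 0 < (j - i) * r₀ := Nat.mul_pos (by omega) (by omega)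
        have e : i * r₀ + (j - i) * r₀ = j * r₀ := by
          rw [← Nat.add_mul]
          congr 1
          omega
        exact horb (i * r₀) ((j - i) * r₀) (by omega) (by rw [e]; exact heq)
      obtain ⟨S, hS1, hS2⟩ := caseB f a c ε hε n ha r₀ h2εn hA hnp
      have := hexpc a S hS1
      omega
end

section
/- Let f be a homeomorphism of a compact metric space (X,d). If f has the L-shadowing property, then f has the shadowing property. -/
open Metric Filter Set

variable {X : Type*} [MetricSpace X]

/-!
Given `ε`, let `δ` be the L-shadowing constant for `ε / 2`. Truncating a `δ`-pseudo-orbit `x`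
outside `[-n, n]` and continuing it there by genuine orbits gives a `δ`-pseudo-orbit whose jumps
vanish off a finite set, so it is `ε / 2`-shadowed by some `zₙ`, and `zₙ` stays `ε / 2`-close to
`x` on `[-n, n]`. By compactness these finite-window shadowing conditions, which are closed, have a
common solution `z`, and `z` then `ε`-shadows all of `x`.
-/

section hIter

lemma hIter_eq_coe_zpow (f : X ≃ₜ X) (k : ℤ) : hIter f k = ⇑(f ^ k) := by
  let toPerm : (X ≃ₜ X) →* Equiv.Perm X :=
    { toFun := Homeomorph.toEquiv, map_one' := rfl, map_mul' := fun _ _ => rfl }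
  funext x
  exact congrArg (· x) (map_zpow toPerm f k).symm

lemma hIter_zero (f : X ≃ₜ X) (x : X) : hIter f 0 x = x := by
  simp [hIter_eq_coe_zpow]

lemma hIter_add_one (f : X ≃ₜ X) (k : ℤ) (x : X) : hIter f (k + 1) x = f (hIter f k x) := by
  rw [hIter_eq_coe_zpow, hIter_eq_coe_zpow, add_comm, zpow_add, zpow_one]
  rfl

lemma continuous_hIter (f : X ≃ₜ X) (k : ℤ) : Continuous (hIter f k) := by
  rw [hIter_eq_coe_zpow]
  exact (f ^ k).continuous

end hIter

section truncate

/-- The sequence equal to `x` on `[-n, n]` that continues by the orbit of `x n` to the right and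
of `x (-n)` to the left. -/
def truncate (f : X ≃ₜ X) (x : ℤ → X) (n : ℕ) (k : ℤ) : X :=
  hIter f (k - max (-(n : ℤ)) (min k n)) (x (max (-(n : ℤ)) (min k n)))

variable (f : X ≃ₜ X) (x : ℤ → X) (n : ℕ)

lemma truncate_of_mem_Icc {k : ℤ} (hk : k ∈ Icc (-(n : ℤ)) n) : truncate f x n k = x k := by
  have hc : max (-(n : ℤ)) (min k n) = k := by
    rw [min_eq_left hk.2, max_eq_right hk.1]
  simp only [truncate, hc, sub_self, hIter_zero]

lemma truncate_add_one_of_notMem_Ico {k : ℤ} (hk : k ∉ Ico (-(n : ℤ)) n) :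
    truncate f x n (k + 1) = f (truncate f x n k) := by
  have hc : max (-(n : ℤ)) (min (k + 1) n) = max (-(n : ℤ)) (min k n) := by
    simp only [mem_Ico, not_and_or, not_le, not_lt] at hk
    omega
  rw [truncate, truncate, hc, ← hIter_add_one, sub_add_eq_add_sub]

lemma isTwoSidedLimitPseudoOrbit_truncate : IsTwoSidedLimitPseudoOrbit f (truncate f x n) := by
  refine tendsto_const_nhds.congr' ?_
  filter_upwards [(finite_Ico (-(n : ℤ)) n).compl_mem_cofinite] with k hk
  rw [truncate_add_one_of_notMem_Ico f x n hk, dist_self]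

end truncate

lemma IsPseudoOrbit.truncate {f : X ≃ₜ X} {x : ℤ → X} {δ : ℝ} (hx : IsPseudoOrbit f δ x)
    (hδ : 0 < δ) (n : ℕ) :
    IsPseudoOrbit f δ (truncate f x n) := by
  intro k
  by_cases hk : k ∈ Ico (-(n : ℤ)) n
  · rw [truncate_of_mem_Icc f x n (Ico_subset_Icc_self hk),
      truncate_of_mem_Icc f x n ⟨by linarith [hk.1], by linarith [hk.2]⟩]
    exact hx k
  · rwa [truncate_add_one_of_notMem_Ico f x n hk, dist_self]

lemma exists_forall_dist_le_of_forall_Icc [CompactSpace X] {g : ℤ → X → X}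
    (hg : ∀ k, Continuous (g k)) {x : ℤ → X} {ε : ℝ}
    (h : ∀ n : ℕ, ∃ z, ∀ k ∈ Icc (-(n : ℤ)) n, dist (g k z) (x k) ≤ ε) :
    ∃ z, ∀ k, dist (g k z) (x k) ≤ ε := by
  let A : ℕ → Set X := fun n => ⋂ k ∈ Icc (-(n : ℤ)) n, {z | dist (g k z) (x k) ≤ ε}
  have hA_succ : ∀ n, A (n + 1) ⊆ A n := fun n =>
    biInter_subset_biInter_left (Icc_subset_Icc (by push_cast; omega) (by push_cast; omega))
  have hA_closed : ∀ n, IsClosed (A n) := fun n =>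
    isClosed_biInter fun k _ => isClosed_le ((hg k).dist continuous_const) continuous_const
  have hA_nonempty : ∀ n, (A n).Nonempty := fun n => by
    obtain ⟨z, hz⟩ := h n
    exact ⟨z, mem_iInter₂.2 hz⟩
  obtain ⟨z, hz⟩ := IsCompact.nonempty_iInter_of_sequence_nonempty_isCompact_isClosed A
    hA_succ hA_nonempty (hA_closed 0).isCompact hA_closed
  refine ⟨z, fun k => mem_iInter₂.1 (mem_iInter.1 hz k.natAbs) k ⟨?_, ?_⟩⟩ <;> omega

theorem stmt8 {X : Type*} [MetricSpace X] [CompactSpace X] (f : X ≃ₜ X)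
    (hL : LShadowingProperty f) :
    ShadowingProperty f := by
  intro ε hε
  obtain ⟨δ, hδ, hshadow⟩ := hL (ε / 2) (half_pos hε)
  refine ⟨δ, hδ, fun x hx => ?_⟩
  have hwindow : ∀ n : ℕ, ∃ z, ∀ k ∈ Icc (-(n : ℤ)) n, dist (hIter f k z) (x k) ≤ ε / 2 := by
    intro n
    obtain ⟨z, hz, -⟩ := hshadow _ (hx.truncate hδ n) (isTwoSidedLimitPseudoOrbit_truncate f x n)
    exact ⟨z, fun k hk => truncate_of_mem_Icc f x n hk ▸ (hz k).le⟩
  obtain ⟨z, hz⟩ := exists_forall_dist_le_of_forall_Icc (continuous_hIter f) hwindow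
  exact ⟨z, fun k => (hz k).trans_lt (half_lt_self hε)⟩
end
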